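/- Let φ(r) = 1/(1+e^{-r}) be the sigmoid and f(x) = (1/2)(y - φ(x^⊤w))² for y ∈ {0,1} and w ∈ ℝ^d. Then for every x: (i) ‖∇² f(x)‖ ≤ 2‖w‖ · ‖∇f(x)‖^{a} · ‖w‖^{1-a} for every a ∈ [0,1], in particular ‖∇²f(x)‖/‖∇f(x)‖^{1/2} ≤ 2‖w‖^{3/2}; and (ii) ‖∇³ f(x)‖ ≤ (√3/24 + 1/2)‖w‖³. Hence f is strongly smooth of order p = 3 with L_2 = 2‖w‖^{3/2}, L_3 = (√3/24 + 1/2)‖w‖³. -/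

import Mathlib

/-!
With `ℓ(t) = (y - σ t)² / 2`, the loss is `f = ℓ ∘ ⟪w, ·⟫`, so `Dᵏf(x) = ℓ⁽ᵏ⁾(⟪w, x⟫) w^{⊗k}` has
norm at most `|ℓ⁽ᵏ⁾| ‖w‖ᵏ`, while `‖∇f(x)‖ = |ℓ'| ‖w‖` exactly. The derivatives of `ℓ` are
polynomials in `s = σ t ∈ (0, 1)`, and for a label `y ∈ {0, 1}` they satisfy `|ℓ'| ≤ 1`,
`|ℓ''| ≤ 2 |ℓ'|` and `|ℓ'''| ≤ 1/2`. Hence `‖D²f‖ ≤ 2 ‖w‖ (|ℓ'| ‖w‖)`, and `|ℓ'| ≤ |ℓ'|ᵃ`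
interpolates between the gradient norm and `‖w‖`.
-/

open Real RealInnerProductSpace
open scoped ContDiff

section CompInner

variable {E : Type*} [NormedAddCommGroup E] [InnerProductSpace ℝ E]

theorem norm_iteratedFDeriv_comp_innerSL_le {g : ℝ → ℝ} {n : ℕ} (hg : ContDiff ℝ n g)
    (w x : E) :
    ‖iteratedFDeriv ℝ n (g ∘ innerSL ℝ w) x‖ ≤ |iteratedDeriv n g ⟪w, x⟫| * ‖w‖ ^ n := by
  rw [(innerSL ℝ w).iteratedFDeriv_comp_right hg x le_rfl]
  refine (ContinuousMultilinearMap.norm_compContinuousLinearMap_le _ _).trans_eq ?_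
  simp [norm_iteratedFDeriv_eq_norm_iteratedDeriv, innerSL_apply_norm]

theorem gradient_comp_innerSL [CompleteSpace E] {g : ℝ → ℝ} {g' : ℝ} (w x : E)
    (hg : HasDerivAt g g' ⟪w, x⟫) :
    gradient (g ∘ innerSL ℝ w) x = g' • w := by
  refine HasGradientAt.gradient ?_
  rw [hasGradientAt_iff_hasFDerivAt]
  refine (hg.comp_hasFDerivAt x (innerSL ℝ w).hasFDerivAt).congr_fderiv ?_
  ext v
  simp

end CompInner

theorem mul_le_mul_rpow_mul_rpow_one_sub {A B a : ℝ} (hA₀ : 0 ≤ A) (hA₁ : A ≤ 1)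
    (hB : 0 ≤ B) (ha : a ∈ Set.Icc (0 : ℝ) 1) : A * B ≤ (A * B) ^ a * B ^ (1 - a) := by
  have hB_split : B ^ a * B ^ (1 - a) = B := by
    rw [← rpow_add' hB (by norm_num), add_sub_cancel, rpow_one]
  calc A * B ≤ A ^ a * B := by gcongr; exact self_le_rpow_of_le_one hA₀ hA₁ ha.2
    _ = (A * B) ^ a * B ^ (1 - a) := by rw [mul_rpow hA₀ hB, mul_assoc, hB_split]

noncomputable section

def sigmoidLoss (y t : ℝ) : ℝ := (1 / 2) * (y - sigmoid t) ^ 2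

def sigmoidLoss' (y t : ℝ) : ℝ := -((y - sigmoid t) * (sigmoid t * (1 - sigmoid t)))

def sigmoidLoss'' (y t : ℝ) : ℝ :=
  (sigmoid t * (1 - sigmoid t)) ^ 2
    - (y - sigmoid t) * (sigmoid t * (1 - sigmoid t) * (1 - 2 * sigmoid t))

def sigmoidLoss''' (y t : ℝ) : ℝ :=
  3 * (sigmoid t * (1 - sigmoid t)) * (sigmoid t * (1 - sigmoid t) * (1 - 2 * sigmoid t))
    - (y - sigmoid t) * (sigmoid t * (1 - sigmoid t) * (1 - 6 * sigmoid t + 6 * sigmoid t ^ 2))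

end

section Derivatives

variable (y : ℝ)

theorem contDiff_sigmoidLoss : ContDiff ℝ ω (sigmoidLoss y) :=
  contDiff_const.mul ((contDiff_const.sub contDiff_sigmoid).pow 2)

theorem hasDerivAt_sigmoidLoss (t : ℝ) : HasDerivAt (sigmoidLoss y) (sigmoidLoss' y t) t := by
  refine (((hasDerivAt_const t y).sub (hasDerivAt_sigmoid t)).pow 2
    |>.const_mul (1 / 2 : ℝ)).congr_deriv ?_
  simp only [sigmoidLoss', Pi.sub_apply]; ring

theorem hasDerivAt_sigmoidLoss' (t : ℝ) :
    HasDerivAt (sigmoidLoss' y) (sigmoidLoss'' y t) t := by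
  have hσ := hasDerivAt_sigmoid t
  refine (((hasDerivAt_const t y).sub hσ).mul
    (hσ.mul ((hasDerivAt_const t 1).sub hσ))).neg.congr_deriv ?_
  simp only [sigmoidLoss'', Pi.sub_apply, Pi.mul_apply]; ring

theorem hasDerivAt_sigmoidLoss'' (t : ℝ) :
    HasDerivAt (sigmoidLoss'' y) (sigmoidLoss''' y t) t := by
  have hσ := hasDerivAt_sigmoid t
  have hσ' := hσ.mul ((hasDerivAt_const t 1).sub hσ)
  refine ((hσ'.pow 2).sub (((hasDerivAt_const t y).sub hσ).mul
    (hσ'.mul ((hσ.const_mul 2).const_sub 1)))).congr_deriv ?_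
  simp only [sigmoidLoss''', Pi.sub_apply, Pi.mul_apply]; ring

theorem iteratedDeriv_two_sigmoidLoss (t : ℝ) :
    iteratedDeriv 2 (sigmoidLoss y) t = sigmoidLoss'' y t := by
  rw [iteratedDeriv_succ, iteratedDeriv_one,
    funext fun s => (hasDerivAt_sigmoidLoss y s).deriv, (hasDerivAt_sigmoidLoss' y t).deriv]

theorem iteratedDeriv_three_sigmoidLoss (t : ℝ) :
    iteratedDeriv 3 (sigmoidLoss y) t = sigmoidLoss''' y t := by
  rw [iteratedDeriv_succ, funext (iteratedDeriv_two_sigmoidLoss y),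
    (hasDerivAt_sigmoidLoss'' y t).deriv]

end Derivatives

section Bounds

variable {y : ℝ}

theorem abs_sigmoidLoss'_le_one (hy : y = 0 ∨ y = 1) (t : ℝ) : |sigmoidLoss' y t| ≤ 1 := by
  have h₀ := sigmoid_pos t
  have h₁ := sigmoid_lt_one t
  rw [sigmoidLoss', abs_le]
  rcases hy with rfl | rfl <;> constructor <;>
    nlinarith [mul_pos h₀ h₀, mul_pos h₀ (sub_pos.2 h₁)]

theorem abs_sigmoidLoss''_le_two_mul (hy : y = 0 ∨ y = 1) (t : ℝ) :
    |sigmoidLoss'' y t| ≤ 2 * |sigmoidLoss' y t| := by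
  have h₀ := sigmoid_pos t
  have h₁ := sigmoid_lt_one t
  have hp := mul_pos h₀ (sub_pos.2 h₁)
  rw [sigmoidLoss'', sigmoidLoss', abs_le]
  rcases hy with rfl | rfl
  · rw [abs_of_pos (by nlinarith [mul_pos hp h₀])]
    constructor <;> nlinarith [mul_pos hp h₀]
  · rw [abs_of_neg (by nlinarith [mul_pos hp (sub_pos.2 h₁)])]
    constructor <;> nlinarith [mul_pos hp (sub_pos.2 h₁)]

theorem abs_sigmoidLoss'''_le_half (hy : y = 0 ∨ y = 1) (t : ℝ) :
    |sigmoidLoss''' y t| ≤ 1 / 2 := by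
  have h₀ := sigmoid_pos t
  have h₁ := sigmoid_lt_one t
  rw [sigmoidLoss''', abs_le]
  rcases hy with rfl | rfl <;> constructor <;>
    nlinarith [mul_pos h₀ h₀, mul_pos (mul_pos h₀ h₀) (sub_pos.2 h₁),
      sq_nonneg (sigmoid t - 1 / 2), sq_nonneg (sigmoid t - 2 / 3), sq_nonneg (sigmoid t - 1 / 3)]

end Bounds

theorem glm_loss_strongly_smooth
    (d : ℕ) (w : EuclideanSpace ℝ (Fin d)) (y : ℝ) (hy : y = 0 ∨ y = 1)
    (f : EuclideanSpace ℝ (Fin d) → ℝ)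
    (hfdef : ∀ x, f x = (1 / 2) * (y - 1 / (1 + Real.exp (-⟪x, w⟫))) ^ 2) :
    ∀ x : EuclideanSpace ℝ (Fin d),
      (∀ a ∈ Set.Icc (0 : ℝ) 1,
        ‖iteratedFDeriv ℝ 2 f x‖ ≤ 2 * ‖w‖ * ‖gradient f x‖ ^ a * ‖w‖ ^ (1 - a)) ∧
      ‖iteratedFDeriv ℝ 2 f x‖ ≤
        2 * ‖w‖ ^ ((3 : ℝ) / 2) * ‖gradient f x‖ ^ ((1 : ℝ) / 2) ∧
      ‖iteratedFDeriv ℝ 3 f x‖ ≤ (Real.sqrt 3 / 24 + 1 / 2) * ‖w‖ ^ 3 := by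
  intro x
  have hf : f = sigmoidLoss y ∘ innerSL ℝ w := by
    funext z
    simp [hfdef, sigmoidLoss, sigmoid_def, real_inner_comm]
  have hD : ∀ n : ℕ, ‖iteratedFDeriv ℝ n f x‖ ≤
      |iteratedDeriv n (sigmoidLoss y) ⟪w, x⟫| * ‖w‖ ^ n := fun n =>
    hf ▸ norm_iteratedFDeriv_comp_innerSL_le ((contDiff_sigmoidLoss y).of_le le_top) w x
  have hgrad : ‖gradient f x‖ = |sigmoidLoss' y ⟪w, x⟫| * ‖w‖ := by
    rw [hf, gradient_comp_innerSL w x (hasDerivAt_sigmoidLoss y _), norm_smul, norm_eq_abs]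
  have hD2 : ‖iteratedFDeriv ℝ 2 f x‖ ≤ 2 * ‖w‖ * ‖gradient f x‖ := by
    have h := hD 2
    rw [iteratedDeriv_two_sigmoidLoss] at h
    rw [hgrad]
    nlinarith [abs_sigmoidLoss''_le_two_mul hy ⟪w, x⟫, sq_nonneg ‖w‖]
  have hD2_interp : ∀ a ∈ Set.Icc (0 : ℝ) 1,
      ‖iteratedFDeriv ℝ 2 f x‖ ≤ 2 * ‖w‖ * ‖gradient f x‖ ^ a * ‖w‖ ^ (1 - a) := by
    intro a ha
    rw [mul_assoc _ (_ ^ a)]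
    refine hD2.trans (mul_le_mul_of_nonneg_left ?_ (by positivity))
    rw [hgrad]
    exact mul_le_mul_rpow_mul_rpow_one_sub (abs_nonneg _) (abs_sigmoidLoss'_le_one hy _)
      (norm_nonneg w) ha
  refine ⟨hD2_interp, ?_, ?_⟩
  · have hw : ‖w‖ ^ ((3 : ℝ) / 2) = ‖w‖ * ‖w‖ ^ (1 - (1 : ℝ) / 2) := by
      rw [← rpow_one_add' (norm_nonneg w) (by norm_num)]; norm_num
    rw [hw]
    linarith [hD2_interp (1 / 2) ⟨by norm_num, by norm_num⟩]
  · calc ‖iteratedFDeriv ℝ 3 f x‖ ≤ |sigmoidLoss''' y ⟪w, x⟫| * ‖w‖ ^ 3 := by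
          simpa only [iteratedDeriv_three_sigmoidLoss] using hD 3
      _ ≤ 1 / 2 * ‖w‖ ^ 3 := by gcongr; exact abs_sigmoidLoss'''_le_half hy _
      _ ≤ (Real.sqrt 3 / 24 + 1 / 2) * ‖w‖ ^ 3 := by gcongr; linarith [sqrt_nonneg 3]
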